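/- Define v_{k,n} := sum over i from n+1 to n+k of [ -C(n-i, i) * C(n+k+i, 2i+1) + C(n-i, i-1) * C(n+k+i, 2i) ] with generalized binomial coefficients. Then for all integers k ≥ 1 and n ≤ -1, v_{k+1, n} = v_{k, n} - v_{k+1, n-1}. -/

import Mathlib

/-!
The generalized coefficients are `Ring.choose` on `ℤ`, so Pascal's rule
`C(m+1, j+1) = C(m, j) + C(m, j+1)` holds for all integers `m, j`. With `N = n + k`, applying it
to the second factor of the summands of `v_{k+1,n}` and to both factors of those of `v_{k+1,n-1}`
rewrites everything in terms of `v_{k,n}` and the products `evenProd i = C(n-i, i) C(N+i, 2i)`,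
`oddProd i = C(n-i, i-1) C(N+i, 2i-1)`. The `oddProd` terms telescope away, and of the
`evenProd` terms only the boundary values remain: the one at `i = n` vanishes because `n < 0`,
and the one at `i = N + 1` equals the `v_{k,n}`-summand at the extra index `i = N + 1`.
-/

open Finset

/-- Generalized binomial coefficient: classical for nonnegative upper index,
`(-1)^k * C(k-m-1, k)` for negative upper index, and `0` for negative lower index. -/
def gchoose (m k : ℤ) : ℤ :=
  if k < 0 then 0
  else if m < 0 then (-1) ^ k.toNat * ((k - m - 1).toNat.choose k.toNat : ℤ)
  else (m.toNat.choose k.toNat : ℤ)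

/-- The double sequence `v_{k,n}`. -/
noncomputable def vseq (k n : ℤ) : ℤ :=
  ∑ i ∈ Finset.Icc (n + 1) (n + k),
    (-(gchoose (n - i) i * gchoose (n + k + i) (2 * i + 1))
      + gchoose (n - i) (i - 1) * gchoose (n + k + i) (2 * i))

lemma gchoose_of_neg (m : ℤ) {k : ℤ} (hk : k < 0) : gchoose m k = 0 := by
  simp [gchoose, hk]

lemma gchoose_eq_ringChoose (m : ℤ) {k : ℤ} (hk : 0 ≤ k) :
    gchoose m k = Ring.choose m k.toNat := by
  rw [gchoose, if_neg hk.not_gt]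
  split_ifs with hm
  · have h := Ring.choose_neg (-m) k.toNat
    rw [neg_neg, show -m + (k.toNat : ℤ) - 1 = ((k - m - 1).toNat : ℤ) by omega,
      Ring.choose_natCast] at h
    rw [h, Units.smul_def, Int.coe_negOnePow_natCast, smul_eq_mul]
  · lift m to ℕ using not_lt.mp hm
    rw [Ring.choose_natCast, Int.toNat_natCast]

lemma gchoose_zero_right (m : ℤ) : gchoose m 0 = 1 := by
  rw [gchoose_eq_ringChoose m le_rfl, Int.toNat_zero, Ring.choose_zero_right]

lemma gchoose_eq_zero_of_lt {m k : ℤ} (hm : 0 ≤ m) (hmk : m < k) : gchoose m k = 0 := by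
  lift m to ℕ using hm
  rw [gchoose_eq_ringChoose _ (by omega), Ring.choose_natCast, Nat.choose_eq_zero_of_lt (by omega),
    Nat.cast_zero]

lemma gchoose_succ_succ (m k : ℤ) :
    gchoose (m + 1) (k + 1) = gchoose m k + gchoose m (k + 1) := by
  rcases lt_trichotomy k (-1) with hk | rfl | hk
  · simp only [gchoose_of_neg _ (show k < 0 by omega), gchoose_of_neg _ (show k + 1 < 0 by omega),
      add_zero]
  · simp only [neg_add_cancel, gchoose_zero_right, gchoose_of_neg _ (show (-1 : ℤ) < 0 by omega),
      zero_add]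
  · rw [gchoose_eq_ringChoose _ (by omega), gchoose_eq_ringChoose _ (by omega),
      gchoose_eq_ringChoose _ (by omega), show (k + 1).toNat = k.toNat + 1 by omega,
      Ring.choose_succ_succ]

def vsummand (n N i : ℤ) : ℤ :=
  -(gchoose (n - i) i * gchoose (N + i) (2 * i + 1))
    + gchoose (n - i) (i - 1) * gchoose (N + i) (2 * i)

lemma vseq_eq_sum_vsummand (k n : ℤ) :
    vseq k n = ∑ i ∈ Icc (n + 1) (n + k), vsummand n (n + k) i :=
  rfl

def evenProd (n N i : ℤ) : ℤ :=
  gchoose (n - i) i * gchoose (N + i) (2 * i)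

def oddProd (n N i : ℤ) : ℤ :=
  gchoose (n - i) (i - 1) * gchoose (N + i) (2 * i - 1)

lemma vsummand_top_add_one (n N i : ℤ) :
    vsummand n (N + 1) i = vsummand n N i + oddProd n N i - evenProd n N i := by
  have h₁ := gchoose_succ_succ (N + i) (2 * i)
  have h₀ := gchoose_succ_succ (N + i) (2 * i - 1)
  rw [sub_add_cancel] at h₀
  rw [vsummand, vsummand, oddProd, evenProd, show N + 1 + i = N + i + 1 by ring, h₁, h₀]
  ring

lemma vsummand_sub_one_left (n N i : ℤ) :
    vsummand (n - 1) N i = evenProd n N i - oddProd n N (i + 1) := by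
  have h₁ := gchoose_succ_succ (N + i) (2 * i)
  have h₀ := gchoose_succ_succ (n - i - 1) (i - 1)
  rw [sub_add_cancel, sub_add_cancel] at h₀
  rw [vsummand, evenProd, oddProd, show n - (i + 1) = n - i - 1 by ring, add_sub_cancel_right,
    show N + (i + 1) = N + i + 1 by ring, show 2 * (i + 1) - 1 = 2 * i + 1 by ring, h₁, h₀,
    show n - 1 - i = n - i - 1 by ring]
  ring

lemma vsummand_last (n N : ℤ) : vsummand n N (N + 1) = evenProd n N (N + 1) := by
  rw [vsummand, evenProd, add_sub_cancel_right]
  rcases lt_trichotomy N (-1) with hN | rfl | hN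
  · simp only [gchoose_of_neg _ (show N + 1 < 0 by omega), gchoose_of_neg _ (show N < 0 by omega)]
    ring
  · norm_num [gchoose_zero_right, gchoose_of_neg, gchoose_eq_ringChoose]
  · rw [gchoose_eq_zero_of_lt (k := 2 * (N + 1) + 1) (by omega) (by omega),
      gchoose_eq_zero_of_lt (k := 2 * (N + 1)) (by omega) (by omega)]
    ring

lemma evenProd_self {n : ℤ} (hn : n < 0) (N : ℤ) : evenProd n N n = 0 := by
  rw [evenProd, gchoose_of_neg _ hn, zero_mul]

lemma sum_Icc_add_one_add_one {M : Type*} [AddCommMonoid M] (f : ℤ → M) (a b : ℤ) :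
    ∑ i ∈ Icc (a + 1) (b + 1), f i = ∑ i ∈ Icc a b, f (i + 1) := by
  rw [← map_add_right_Icc, sum_map]
  rfl

lemma sum_Icc_sub_sum_Icc_add_one {M : Type*} [AddCommGroup M] (f : ℤ → M) {a b : ℤ}
    (h : a ≤ b + 1) :
    ∑ i ∈ Icc a b, f i - ∑ i ∈ Icc (a + 1) (b + 1), f i = f a - f (b + 1) := by
  have hl := sum_insert (f := f) (show a ∉ Icc (a + 1) (b + 1) by simp)
  have hr := sum_insert (f := f) (show b + 1 ∉ Icc a b by simp)
  rw [insert_Icc_add_one_left_eq_Icc h] at hl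
  rw [insert_Icc_right_eq_Icc_add_one h] at hr
  rw [sub_eq_sub_iff_add_eq_add, ← hl, hr, add_comm]

lemma sum_vsummand_top_add_one {n N : ℤ} (hnN : n ≤ N) (hn : n < 0) :
    ∑ i ∈ Icc (n + 1) (N + 1), vsummand n (N + 1) i =
      ∑ i ∈ Icc (n + 1) N, vsummand n N i - ∑ i ∈ Icc n N, vsummand (n - 1) N i := by
  have hlast : ∑ i ∈ Icc (n + 1) (N + 1), vsummand n N i =
      ∑ i ∈ Icc (n + 1) N, vsummand n N i + evenProd n N (N + 1) := by
    rw [← insert_Icc_right_eq_Icc_add_one (by omega), sum_insert (by simp), vsummand_last,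
      add_comm]
  have heven := sum_Icc_sub_sum_Icc_add_one (evenProd n N) (show n ≤ N + 1 by omega)
  rw [evenProd_self hn] at heven
  simp only [vsummand_top_add_one, vsummand_sub_one_left, sum_add_distrib, sum_sub_distrib,
    ← sum_Icc_add_one_add_one (oddProd n N)]
  linear_combination hlast + heven

theorem stmt_10 (k n : ℤ) (hk : 1 ≤ k) (hn : n ≤ -1) :
    vseq (k + 1) n = vseq k n - vseq (k + 1) (n - 1) := by
  simp only [vseq_eq_sum_vsummand, show n + (k + 1) = n + k + 1 by ring, sub_add_cancel,
    show n - 1 + (k + 1) = n + k by ring]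
  exact sum_vsummand_top_add_one (by omega) (by omega)
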